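/- For all λ > 0 and all γ ≥ 0: (1) ∫₀^∞ e^{−γh} (8/3)π²λ^{5/2} h⁴ e^{−λπh²} dh ≤ ∫₀^∞ e^{−γh} 4πλ^{3/2} h² e^{−λπh²} dh and ∫₀^∞ e^{−γr} (4λπr/3)(erfc(r√(λπ)) + 2r√λ e^{−λπr²}) dr ≤ ∫₀^∞ e^{−γr} 4λπ r · erfc(r√(λπ)) dr; (2) the reverse inequalities hold when e^{−γ·} is replaced by e^{γ·} (all integrals being finite). That is, H_{I'} ≥_L H_I, R_{I'} ≥_L R_I, H_{I'} ≥_{mgf} H_I and R_{I'} ≥_{mgf} R_I. -/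

import Mathlib

/-!
Both density pairs differ by an exact derivative: `f_{H_I} - f_{H_{I'}} = ψ_H'` with
`ψ_H(h) = (4πλ^{3/2}/3) h³ e^{-λπh²}`, and `f_{R_I} - f_{R_{I'}} = ψ_R'` with
`ψ_R(r) = (4λπ/3) r² erfc(r√(λπ))`; both primitives vanish at `0` and are nonnegative.
Integrating by parts against `e^{εx}` gives `∫ e^{εx} (f - f') = -ε ∫ e^{εx} ψ`, whose sign is
that of `-ε`: this is the Laplace order for `ε = -γ` and the reversed mgf order for `ε = γ`.
Every function involved decays faster than any exponential (for `erfc` because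
`erfc z ≤ e^{-z²}/√π` when `z ≥ 1`), which gives all integrability and kills the boundary term.
-/

open MeasureTheory Set

/-- The complementary error function `erfc(z) = (2/√π) ∫_z^∞ e^{−u²} du`. -/
noncomputable def erfc (z : ℝ) : ℝ := 2 / Real.sqrt Real.pi * ∫ u in Set.Ioi z, Real.exp (-u ^ 2)

/-- Density of the nearest-interferer distance `H_I` at a typical max-interference epoch. -/
noncomputable def fHI (lam h : ℝ) : ℝ :=
  4 * Real.pi * lam ^ ((3:ℝ)/2) * h ^ 2 * Real.exp (-(lam * Real.pi * h ^ 2))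

/-- Density of the typical tropical-interference-handover distance `H_{I'}`. -/
noncomputable def fHI' (lam h : ℝ) : ℝ :=
  8/3 * Real.pi ^ 2 * lam ^ ((5:ℝ)/2) * h ^ 4 * Real.exp (-(lam * Real.pi * h ^ 2))

/-- Density of the serving-station distance `R_I` at a typical max-interference epoch. -/
noncomputable def fRI (lam r : ℝ) : ℝ :=
  4 * lam * Real.pi * r * erfc (r * Real.sqrt (lam * Real.pi))

/-- Density of the serving-station distance `R_{I'}` at a typical min-interference epoch. -/
noncomputable def fRI' (lam r : ℝ) : ℝ :=
  4 * lam * Real.pi * r / 3 *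
    (erfc (r * Real.sqrt (lam * Real.pi)) +
      2 * r * Real.sqrt lam * Real.exp (-(lam * Real.pi * r ^ 2)))

open Real Filter Topology Asymptotics

lemma integrable_exp_neg_sq : Integrable fun u : ℝ => exp (-u ^ 2) := by
  simpa using integrable_exp_neg_mul_sq one_pos

lemma erfc_eq_sub (z : ℝ) :
    erfc z = 2 / √π * ((∫ u in Ioi 0, exp (-u ^ 2)) - ∫ u in (0 : ℝ)..z, exp (-u ^ 2)) := by
  rw [erfc, ← intervalIntegral.integral_Ioi_sub_Ioi' integrable_exp_neg_sq.integrableOn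
    integrable_exp_neg_sq.integrableOn, sub_sub_cancel]

lemma hasDerivAt_erfc (z : ℝ) : HasDerivAt erfc (-(2 / √π * exp (-z ^ 2))) z := by
  have hF := ((by fun_prop : Continuous fun u : ℝ => exp (-u ^ 2)).integral_hasStrictDerivAt
    0 z).hasDerivAt
  rw [show erfc = _ from funext erfc_eq_sub]
  exact ((hF.const_sub (∫ u in Ioi 0, exp (-u ^ 2))).const_mul (2 / √π)).congr_deriv (by ring)

@[fun_prop]
lemma continuous_erfc : Continuous erfc :=
  continuous_iff_continuousAt.2 fun z => (hasDerivAt_erfc z).continuousAt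

lemma erfc_nonneg (z : ℝ) : 0 ≤ erfc z :=
  mul_nonneg (by positivity) (setIntegral_nonneg measurableSet_Ioi fun _ _ => (exp_pos _).le)

lemma integral_Ioi_mul_exp_neg_sq (z : ℝ) :
    ∫ u in Ioi z, u * exp (-u ^ 2) = exp (-z ^ 2) / 2 := by
  have hderiv : ∀ u ∈ Ioi z, HasDerivAt (fun u : ℝ => -exp (-u ^ 2) / 2) (u * exp (-u ^ 2)) u :=
    fun u _ => by
      refine ((hasDerivAt_pow 2 u).fun_neg.exp.fun_neg.div_const 2).congr_deriv ?_
      simp only [Nat.cast_ofNat]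
      ring
  have hint : IntegrableOn (fun u : ℝ => u * exp (-u ^ 2)) (Ioi z) := by
    simpa using (integrable_mul_exp_neg_mul_sq one_pos).integrableOn
  have hlim : Tendsto (fun u : ℝ => -exp (-u ^ 2) / 2) atTop (𝓝 0) := by
    simpa using ((tendsto_exp_atBot.comp
      (tendsto_neg_atTop_atBot.comp (tendsto_pow_atTop two_ne_zero))).neg.div_const 2)
  rw [integral_Ioi_of_hasDerivAt_of_tendsto (by fun_prop : Continuous _).continuousWithinAt
    hderiv hint hlim]
  ring

lemma erfc_le_exp_neg_sq {z : ℝ} (hz : 1 ≤ z) : erfc z ≤ exp (-z ^ 2) / √π := by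
  have hmono : ∫ u in Ioi z, exp (-u ^ 2) ≤ ∫ u in Ioi z, u * exp (-u ^ 2) := by
    refine setIntegral_mono_on integrable_exp_neg_sq.integrableOn ?_ measurableSet_Ioi
      fun u hu => le_mul_of_one_le_left (exp_pos _).le (hz.trans (le_of_lt hu))
    simpa using (integrable_mul_exp_neg_mul_sq one_pos).integrableOn
  calc erfc z ≤ 2 / √π * (exp (-z ^ 2) / 2) := by
        rw [erfc, ← integral_Ioi_mul_exp_neg_sq]
        exact mul_le_mul_of_nonneg_left hmono (by positivity)
    _ = exp (-z ^ 2) / √π := by ring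

lemma erfc_isBigO : erfc =O[atTop] fun z => exp (-z ^ 2) := by
  refine IsBigO.of_bound (1 / √π) ?_
  filter_upwards [eventually_ge_atTop 1] with z hz
  rw [norm_of_nonneg (erfc_nonneg z), norm_of_nonneg (exp_pos _).le]
  exact (erfc_le_exp_neg_sq hz).trans_eq (by ring)

def SuperexponentialDecay (g : ℝ → ℝ) : Prop :=
  ∀ β : ℝ, g =o[atTop] fun x => exp (β * x)

namespace SuperexponentialDecay

variable {f g : ℝ → ℝ}

lemma of_isBigO (hg : SuperexponentialDecay g) (hfg : f =O[atTop] g) :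
    SuperexponentialDecay f :=
  fun β => hfg.trans_isLittleO (hg β)

lemma add (hf : SuperexponentialDecay f) (hg : SuperexponentialDecay g) :
    SuperexponentialDecay fun x => f x + g x :=
  fun β => (hf β).add (hg β)

lemma sub (hf : SuperexponentialDecay f) (hg : SuperexponentialDecay g) :
    SuperexponentialDecay fun x => f x - g x :=
  fun β => (hf β).sub (hg β)

lemma const_mul (hg : SuperexponentialDecay g) (c : ℝ) :
    SuperexponentialDecay fun x => c * g x :=
  fun β => (hg β).const_mul_left c

lemma pow_mul (hg : SuperexponentialDecay g) (k : ℕ) :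
    SuperexponentialDecay fun x => x ^ k * g x := fun β =>
  ((isLittleO_pow_exp_pos_mul_atTop k one_pos).mul (hg (β - 1))).congr_right fun x => by
    rw [← exp_add]; ring_nf

lemma comp_mul_const (hg : SuperexponentialDecay g) {s : ℝ} (hs : 0 < s) :
    SuperexponentialDecay fun x => g (x * s) := fun β =>
  ((hg (β / s)).comp_tendsto (tendsto_id.atTop_mul_const hs)).congr_right fun x => by
    simp only [Function.comp, id]
    field_simp

lemma tendsto_exp_mul (hg : SuperexponentialDecay g) (ε : ℝ) :
    Tendsto (fun x => exp (ε * x) * g x) atTop (𝓝 0) := by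
  have h := (isBigO_refl (fun x => exp (ε * x)) atTop).mul_isLittleO (hg (-ε))
  refine (isLittleO_one_iff ℝ).1 (h.congr_right fun x => ?_)
  rw [← exp_add]; ring_nf; exact exp_zero

lemma integrableOn_exp_mul (hg : SuperexponentialDecay g) (hc : Continuous g) (ε a : ℝ) :
    IntegrableOn (fun x => exp (ε * x) * g x) (Ioi a) := by
  refine integrable_of_isBigO_exp_neg one_pos (by fun_prop) ?_
  have h := (isBigO_refl (fun x => exp (ε * x)) atTop).mul_isLittleO (hg (-(ε + 1)))
  refine h.isBigO.congr_right fun x => ?_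
  rw [← exp_add]; ring_nf

end SuperexponentialDecay

lemma superexponentialDecay_exp_neg_mul_sq {b : ℝ} (hb : 0 < b) :
    SuperexponentialDecay fun x => exp (-(b * x ^ 2)) := fun β =>
  isLittleO_exp_comp_exp_comp.2 <| by
    have : Tendsto (fun x : ℝ => x * (β + b * x)) atTop atTop :=
      tendsto_id.atTop_mul_atTop₀
        (tendsto_atTop_add_const_left _ _ (tendsto_id.const_mul_atTop hb))
    exact this.congr fun x => by ring

lemma superexponentialDecay_erfc : SuperexponentialDecay erfc :=
  (superexponentialDecay_exp_neg_mul_sq one_pos).of_isBigO (by simpa using erfc_isBigO)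

lemma superexponentialDecay_mul_pow_mul_exp {b : ℝ} (hb : 0 < b) (c : ℝ) (k : ℕ) :
    SuperexponentialDecay fun x => c * x ^ k * exp (-(b * x ^ 2)) := by
  simpa only [mul_assoc] using ((superexponentialDecay_exp_neg_mul_sq hb).pow_mul k).const_mul c

lemma integral_Ioi_exp_mul_mul_deriv {ψ ψ' : ℝ → ℝ} (hψ0 : ψ 0 = 0)
    (hψ : ∀ x, HasDerivAt ψ (ψ' x) x) (hc : Continuous ψ')
    (hdψ : SuperexponentialDecay ψ) (hdψ' : SuperexponentialDecay ψ') (ε : ℝ) :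
    ∫ x in Ioi 0, exp (ε * x) * ψ' x = -ε * ∫ x in Ioi 0, exp (ε * x) * ψ x := by
  have hcψ : Continuous ψ := continuous_iff_continuousAt.2 fun x => (hψ x).continuousAt
  have hI := hdψ.integrableOn_exp_mul hcψ ε 0
  have hI' := hdψ'.integrableOn_exp_mul hc ε 0
  have hderiv : ∀ x ∈ Ioi (0 : ℝ), HasDerivAt (fun x => exp (ε * x) * ψ x)
      (exp (ε * x) * ψ' x + ε * (exp (ε * x) * ψ x)) x := fun x _ =>
    (((hasDerivAt_id x).const_mul ε).exp.mul (hψ x)).congr_deriv (by simp only [id]; ring)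
  have hFTC := integral_Ioi_of_hasDerivAt_of_tendsto
    (by fun_prop : Continuous _).continuousWithinAt hderiv (hI'.add (hI.const_mul ε)) (hdψ.tendsto_exp_mul ε)
  rw [integral_add hI' (hI.const_mul ε), integral_const_mul, hψ0, mul_zero, sub_zero] at hFTC
  linarith

lemma integral_exp_mul_le_of_hasDerivAt {f g ψ : ℝ → ℝ} (hf : Continuous f) (hg : Continuous g)
    (hdf : SuperexponentialDecay f) (hdg : SuperexponentialDecay g) (hψ0 : ψ 0 = 0)
    (hψ : ∀ x, HasDerivAt ψ (f x - g x) x) (hdψ : SuperexponentialDecay ψ)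
    (hψ_nonneg : ∀ x > 0, 0 ≤ ψ x) {γ : ℝ} (hγ : 0 ≤ γ) :
    ∫ x in Ioi 0, exp (-γ * x) * g x ≤ ∫ x in Ioi 0, exp (-γ * x) * f x ∧
      ∫ x in Ioi 0, exp (γ * x) * f x ≤ ∫ x in Ioi 0, exp (γ * x) * g x := by
  have hsub (ε : ℝ) : (∫ x in Ioi 0, exp (ε * x) * f x) - ∫ x in Ioi 0, exp (ε * x) * g x =
      -ε * ∫ x in Ioi 0, exp (ε * x) * ψ x := by
    rw [← integral_sub (hdf.integrableOn_exp_mul hf ε 0) (hdg.integrableOn_exp_mul hg ε 0),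
      ← integral_Ioi_exp_mul_mul_deriv hψ0 hψ (hf.sub hg) hdψ (hdf.sub hdg)]
    simp only [mul_sub]
  have hpos (ε : ℝ) : 0 ≤ ∫ x in Ioi 0, exp (ε * x) * ψ x :=
    setIntegral_nonneg measurableSet_Ioi fun x hx => mul_nonneg (exp_pos _).le (hψ_nonneg x hx)
  constructor
  · nlinarith [hsub (-γ), hpos (-γ)]
  · nlinarith [hsub γ, hpos γ]

noncomputable def primitiveH (lam h : ℝ) : ℝ :=
  4 * π * lam ^ ((3 : ℝ) / 2) / 3 * h ^ 3 * exp (-(lam * π * h ^ 2))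

noncomputable def primitiveR (lam r : ℝ) : ℝ :=
  4 * lam * π / 3 * r ^ 2 * erfc (r * √(lam * π))

section Densities

variable {lam : ℝ}

lemma continuous_fHI : Continuous (fHI lam) := by unfold fHI; fun_prop

lemma continuous_fHI' : Continuous (fHI' lam) := by unfold fHI'; fun_prop

lemma continuous_fRI : Continuous (fRI lam) := by unfold fRI; fun_prop

lemma continuous_fRI' : Continuous (fRI' lam) := by unfold fRI'; fun_prop

lemma superexponentialDecay_fHI (hlam : 0 < lam) : SuperexponentialDecay (fHI lam) :=
  superexponentialDecay_mul_pow_mul_exp (by positivity) _ 2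

lemma superexponentialDecay_fHI' (hlam : 0 < lam) : SuperexponentialDecay (fHI' lam) :=
  superexponentialDecay_mul_pow_mul_exp (by positivity) _ 4

lemma superexponentialDecay_primitiveH (hlam : 0 < lam) :
    SuperexponentialDecay (primitiveH lam) :=
  superexponentialDecay_mul_pow_mul_exp (by positivity) _ 3

lemma superexponentialDecay_erfc_mul_sqrt (hlam : 0 < lam) :
    SuperexponentialDecay fun r => erfc (r * √(lam * π)) :=
  superexponentialDecay_erfc.comp_mul_const (by positivity)

lemma superexponentialDecay_fRI (hlam : 0 < lam) : SuperexponentialDecay (fRI lam) := by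
  convert ((superexponentialDecay_erfc_mul_sqrt hlam).pow_mul 1).const_mul (4 * lam * π) using 1
  funext r
  simp only [fRI]
  ring

lemma superexponentialDecay_fRI' (hlam : 0 < lam) : SuperexponentialDecay (fRI' lam) := by
  convert (((superexponentialDecay_erfc_mul_sqrt hlam).pow_mul 1).const_mul (4 * lam * π / 3)).add
    (superexponentialDecay_mul_pow_mul_exp (by positivity : 0 < lam * π)
      (8 * lam * π * √lam / 3) 2) using 1
  funext r
  simp only [fRI']
  ring

lemma superexponentialDecay_primitiveR (hlam : 0 < lam) :
    SuperexponentialDecay (primitiveR lam) := by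
  convert ((superexponentialDecay_erfc_mul_sqrt hlam).pow_mul 2).const_mul (4 * lam * π / 3)
    using 1
  funext r
  simp only [primitiveR]
  ring

lemma primitiveH_nonneg (hlam : 0 ≤ lam) (h : ℝ) (hh : 0 < h) : 0 ≤ primitiveH lam h := by
  unfold primitiveH
  positivity

lemma primitiveR_nonneg (hlam : 0 ≤ lam) (r : ℝ) : 0 ≤ primitiveR lam r :=
  mul_nonneg (by positivity) (erfc_nonneg _)

lemma hasDerivAt_primitiveH (hlam : 0 < lam) (h : ℝ) :
    HasDerivAt (primitiveH lam) (fHI lam h - fHI' lam h) h := by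
  have hpow : lam ^ ((5 : ℝ) / 2) = lam ^ ((3 : ℝ) / 2) * lam := by
    rw [show (5 : ℝ) / 2 = 3 / 2 + 1 by norm_num, rpow_add hlam, rpow_one]
  have hgauss := ((hasDerivAt_pow 2 h).const_mul (lam * π)).fun_neg.exp
  refine (((hasDerivAt_pow 3 h).const_mul (4 * π * lam ^ ((3 : ℝ) / 2) / 3)).mul
    hgauss).congr_deriv ?_
  simp only [fHI, fHI', hpow, Nat.cast_ofNat]
  ring

lemma hasDerivAt_primitiveR (hlam : 0 < lam) (r : ℝ) :
    HasDerivAt (primitiveR lam) (fRI lam r - fRI' lam r) r := by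
  have hs : 2 / √π * √(lam * π) = 2 * √lam := by
    rw [sqrt_mul hlam.le]
    field_simp
  have hsq : (r * √(lam * π)) ^ 2 = lam * π * r ^ 2 := by
    rw [mul_pow, sq_sqrt (by positivity)]
    ring
  have herfc : HasDerivAt (fun r => erfc (r * √(lam * π)))
      (-(2 / √π * exp (-(r * √(lam * π)) ^ 2)) * √(lam * π)) r :=
    HasDerivAt.comp (h₂ := erfc) r (hasDerivAt_erfc _) (hasDerivAt_mul_const _)
  refine (((hasDerivAt_pow 2 r).const_mul (4 * lam * π / 3)).mul herfc).congr_deriv ?_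
  simp only [fRI, fRI', hsq, Nat.cast_ofNat]
  linear_combination (-(4 * lam * π / 3) * r ^ 2 * exp (-(lam * π * r ^ 2))) * hs

end Densities

/-- Laplace-transform and mgf orderings `H_{I'} ≥_L H_I`, `R_{I'} ≥_L R_I`,
`H_{I'} ≥_{mgf} H_I` and `R_{I'} ≥_{mgf} R_I`: for all `λ > 0` and `γ ≥ 0`,
(1) `∫ e^{−γh} f_{H_{I'}} ≤ ∫ e^{−γh} f_{H_I}` and `∫ e^{−γr} f_{R_{I'}} ≤ ∫ e^{−γr} f_{R_I}`;
(2) the reverse inequalities hold with `e^{−γ·}` replaced by `e^{γ·}`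
(all integrals being finite). -/
theorem stmt_15 (lam γ : ℝ) (hlam : 0 < lam) (hγ : 0 ≤ γ) :
    IntegrableOn (fun h : ℝ => Real.exp (-(γ * h)) * fHI' lam h) (Ioi 0) ∧
    IntegrableOn (fun h : ℝ => Real.exp (-(γ * h)) * fHI lam h) (Ioi 0) ∧
    IntegrableOn (fun r : ℝ => Real.exp (-(γ * r)) * fRI' lam r) (Ioi 0) ∧
    IntegrableOn (fun r : ℝ => Real.exp (-(γ * r)) * fRI lam r) (Ioi 0) ∧
    IntegrableOn (fun h : ℝ => Real.exp (γ * h) * fHI' lam h) (Ioi 0) ∧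
    IntegrableOn (fun h : ℝ => Real.exp (γ * h) * fHI lam h) (Ioi 0) ∧
    IntegrableOn (fun r : ℝ => Real.exp (γ * r) * fRI' lam r) (Ioi 0) ∧
    IntegrableOn (fun r : ℝ => Real.exp (γ * r) * fRI lam r) (Ioi 0) ∧
    (∫ h in Ioi (0:ℝ), Real.exp (-(γ * h)) * fHI' lam h) ≤
      (∫ h in Ioi (0:ℝ), Real.exp (-(γ * h)) * fHI lam h) ∧
    (∫ r in Ioi (0:ℝ), Real.exp (-(γ * r)) * fRI' lam r) ≤
      (∫ r in Ioi (0:ℝ), Real.exp (-(γ * r)) * fRI lam r) ∧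
    (∫ h in Ioi (0:ℝ), Real.exp (γ * h) * fHI' lam h) ≥
      (∫ h in Ioi (0:ℝ), Real.exp (γ * h) * fHI lam h) ∧
    (∫ r in Ioi (0:ℝ), Real.exp (γ * r) * fRI' lam r) ≥
      ∫ r in Ioi (0:ℝ), Real.exp (γ * r) * fRI lam r := by
  have hH := integral_exp_mul_le_of_hasDerivAt continuous_fHI continuous_fHI'
    (superexponentialDecay_fHI hlam) (superexponentialDecay_fHI' hlam) (by simp [primitiveH])
    (hasDerivAt_primitiveH hlam) (superexponentialDecay_primitiveH hlam)
    (primitiveH_nonneg hlam.le) hγ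
  have hR := integral_exp_mul_le_of_hasDerivAt continuous_fRI continuous_fRI'
    (superexponentialDecay_fRI hlam) (superexponentialDecay_fRI' hlam) (by simp [primitiveR])
    (hasDerivAt_primitiveR hlam) (superexponentialDecay_primitiveR hlam)
    (fun r _ => primitiveR_nonneg hlam.le r) hγ
  have iH := (superexponentialDecay_fHI hlam).integrableOn_exp_mul continuous_fHI
  have iH' := (superexponentialDecay_fHI' hlam).integrableOn_exp_mul continuous_fHI'
  have iR := (superexponentialDecay_fRI hlam).integrableOn_exp_mul continuous_fRI
  have iR' := (superexponentialDecay_fRI' hlam).integrableOn_exp_mul continuous_fRI'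
  simp only [← neg_mul]
  exact ⟨iH' _ 0, iH _ 0, iR' _ 0, iR _ 0, iH' _ 0, iH _ 0, iR' _ 0, iR _ 0,
    hH.1, hR.1, hH.2, hR.2⟩
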